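/- Let Y = α_u^{-1/2}(log(X/u) - γ) 1{X > u} where α_u = P(X > u), and suppose X has tail P(X > x) = β x^{-1/γ}(1 + C x^{-δ} + o(x^{-δ})) as x → ∞ with β, γ, δ > 0. Then as u → ∞: (i) E(Y) = α_u^{-1/2} β C (1/(1/γ+δ) − γ) u^{-1/γ−δ} + o(α_u^{-1/2} u^{-1/γ−δ}) → 0, and (ii) Var(Y) → γ². -/

import Mathlib

/-!
Let `L_u = log (X / u)` on `{X > u}` and `0` elsewhere, so that
`Y_u = α_u^{-1/2} (L_u - γ 1{X > u})`.
Since `{L_u > t} = {X > u e^t}` for `t > 0`, the layer-cake formula gives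
`E[L_u^(k+1)] = (k+1) ∫_0^∞ t^k α(u e^t) dt`. Integrating the two-term tail expansion against
`t^k dt`, with `∫_0^∞ t^k (u e^t)^(-a) dt = k! a^(-(k+1)) u^(-a)`, yields
`E[L_u] - γ α_u = βC (1/(1/γ+δ) - γ) u^(-1/γ-δ) + o(u^(-1/γ-δ))` and `E[L_u^k] ~ k! γ^k α_u`.
Multiplied by `α_u^{-1/2}`, the first is the mean expansion, which tends to `0` because
`α_u ~ β u^(-1/γ)`; the second gives
`Var Y_u = (E[L_u²] - 2γ E[L_u] + γ² α_u) / α_u - E[Y_u]² → 2γ² - 2γ² + γ² = γ²`.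
-/

open Filter Real Asymptotics MeasureTheory ProbabilityTheory Set
open scoped Nat Topology

/-- For `x = u e^t` this is `∫_u^∞ log (x / u) ^ k g(x) dx / x`. -/
noncomputable def tailLogIntegral (k : ℕ) (g : ℝ → ℝ) (u : ℝ) : ℝ :=
  ∫ t in Ioi 0, t ^ k * g (u * exp t)

lemma mul_exp_rpow_neg {u : ℝ} (hu : 0 < u) (a t : ℝ) :
    (u * exp t) ^ (-a) = u ^ (-a) * exp (-(a * t)) := by
  rw [mul_rpow hu.le (exp_pos t).le, ← exp_mul, mul_comm t, neg_mul]

lemma integral_pow_mul_exp_neg_mul_Ioi (k : ℕ) {a : ℝ} (ha : 0 < a) :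
    ∫ t in Ioi 0, t ^ k * exp (-(a * t)) = k ! / a ^ (k + 1) := by
  have key := integral_rpow_mul_exp_neg_mul_Ioi (by positivity : (0 : ℝ) < k + 1) ha
  simp_rw [add_sub_cancel_right, rpow_natCast] at key
  rw [key, Gamma_nat_eq_factorial, ← Nat.cast_add_one, rpow_natCast, one_div, inv_pow,
    inv_mul_eq_div]

lemma integrableOn_pow_mul_exp_neg_mul_Ioi (k : ℕ) {a : ℝ} (ha : 0 < a) :
    IntegrableOn (fun t => t ^ k * exp (-(a * t))) (Ioi 0) :=
  .of_integral_ne_zero (by rw [integral_pow_mul_exp_neg_mul_Ioi k ha]; positivity)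

lemma integrableOn_pow_mul_mul_exp_rpow_neg (k : ℕ) {a u : ℝ} (ha : 0 < a) (hu : 0 < u) :
    IntegrableOn (fun t => t ^ k * (u * exp t) ^ (-a)) (Ioi 0) := by
  simp_rw [mul_exp_rpow_neg hu, mul_left_comm _ (u ^ (-a))]
  exact (integrableOn_pow_mul_exp_neg_mul_Ioi k ha).const_mul _

lemma integral_pow_mul_mul_exp_rpow_neg (k : ℕ) {a u : ℝ} (ha : 0 < a) (hu : 0 < u) :
    ∫ t in Ioi 0, t ^ k * (u * exp t) ^ (-a) = k ! / a ^ (k + 1) * u ^ (-a) := by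
  simp_rw [mul_exp_rpow_neg hu, mul_left_comm _ (u ^ (-a)), integral_const_mul,
    integral_pow_mul_exp_neg_mul_Ioi k ha, mul_comm]

lemma eventually_norm_pow_mul_comp_mul_exp_le {g : ℝ → ℝ} {c p : ℝ}
    (hg : ∀ᶠ x in atTop, ‖g x‖ ≤ c * ‖x ^ (-p)‖) (k : ℕ) :
    ∀ᶠ u in atTop, ∀ t ∈ Ioi (0 : ℝ),
      ‖t ^ k * g (u * exp t)‖ ≤ c * (t ^ k * (u * exp t) ^ (-p)) := by
  obtain ⟨M, hM⟩ := eventually_atTop.1 hg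
  filter_upwards [eventually_ge_atTop M, eventually_gt_atTop 0] with u hMu hu t ht
  have hx : M ≤ u * exp t := hMu.trans (le_mul_of_one_le_right hu.le (one_le_exp ht.le))
  have hx0 : 0 < u * exp t := by positivity
  rw [norm_mul, norm_pow, norm_of_nonneg ht.le, mul_left_comm]
  refine mul_le_mul_of_nonneg_left ?_ (pow_nonneg ht.le k)
  simpa only [norm_of_nonneg (rpow_nonneg hx0.le _)] using hM _ hx

lemma eventually_integrableOn_pow_mul_comp_mul_exp {g : ℝ → ℝ} {p : ℝ}
    (hg : Measurable g) (h : g =O[atTop] fun x => x ^ (-p)) (hp : 0 < p) (k : ℕ) :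
    ∀ᶠ u in atTop, IntegrableOn (fun t => t ^ k * g (u * exp t)) (Ioi 0) := by
  obtain ⟨c, hc⟩ := h.bound
  filter_upwards [eventually_norm_pow_mul_comp_mul_exp_le hc k, eventually_gt_atTop 0]
    with u hbound hu
  exact ((integrableOn_pow_mul_mul_exp_rpow_neg k hp hu).const_mul c).mono' (by fun_prop)
    (ae_restrict_of_forall_mem measurableSet_Ioi hbound)

lemma isLittleO_tailLogIntegral {g : ℝ → ℝ} {p : ℝ} (h : g =o[atTop] fun x => x ^ (-p))
    (hp : 0 < p) (k : ℕ) :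
    tailLogIntegral k g =o[atTop] fun u => u ^ (-p) := by
  refine isLittleO_iff.2 fun c hc => ?_
  have hK : (0 : ℝ) < k ! / p ^ (k + 1) := by positivity
  filter_upwards [eventually_norm_pow_mul_comp_mul_exp_le (h.def (div_pos hc hK)) k,
    eventually_gt_atTop 0] with u hbound hu
  calc ‖tailLogIntegral k g u‖
      ≤ ∫ t in Ioi 0, c / (k ! / p ^ (k + 1)) * (t ^ k * (u * exp t) ^ (-p)) :=
        norm_integral_le_of_norm_le ((integrableOn_pow_mul_mul_exp_rpow_neg k hp hu).const_mul _)
          (ae_restrict_of_forall_mem measurableSet_Ioi hbound)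
    _ = c * ‖u ^ (-p)‖ := by
        rw [integral_const_mul, integral_pow_mul_mul_exp_rpow_neg k hp hu,
          norm_of_nonneg (rpow_nonneg hu.le _)]
        field_simp

lemma isLittleO_tailLogIntegral_sub {g : ℝ → ℝ} (hg : Measurable g) {a b c d : ℝ}
    (ha : 0 < a) (hb : 0 < b)
    (h : (fun x => g x - (c * x ^ (-a) + d * x ^ (-b))) =o[atTop] fun x => x ^ (-b)) (k : ℕ) :
    (fun u => tailLogIntegral k g u -
        (c * (k ! / a ^ (k + 1)) * u ^ (-a) + d * (k ! / b ^ (k + 1)) * u ^ (-b)))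
      =o[atTop] fun u => u ^ (-b) := by
  set e := fun x => g x - (c * x ^ (-a) + d * x ^ (-b))
  refine (isLittleO_tailLogIntegral h hb k).congr' ?_ EventuallyEq.rfl
  filter_upwards [eventually_integrableOn_pow_mul_comp_mul_exp (by fun_prop) h.isBigO hb k,
    eventually_gt_atTop 0] with u he hu
  have hsplit : (fun t => t ^ k * g (u * exp t)) = fun t => t ^ k * e (u * exp t) +
      c * (t ^ k * (u * exp t) ^ (-a)) + d * (t ^ k * (u * exp t) ^ (-b)) := by
    ext t; simp only [e]; ring
  have hia := (integrableOn_pow_mul_mul_exp_rpow_neg k ha hu).const_mul c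
  have hib := (integrableOn_pow_mul_mul_exp_rpow_neg k hb hu).const_mul d
  have heia : IntegrableOn (fun t => t ^ k * e (u * exp t) +
      c * (t ^ k * (u * exp t) ^ (-a))) (Ioi 0) := he.add hia
  simp only [tailLogIntegral]
  rw [hsplit, integral_add heia hib, integral_add he hia, integral_const_mul,
    integral_const_mul, integral_pow_mul_mul_exp_rpow_neg k ha hu,
    integral_pow_mul_mul_exp_rpow_neg k hb hu]
  ring

lemma isLittleO_tailLogIntegral_zero_sub_inv_mul {g : ℝ → ℝ} (hg : Measurable g) {a b c d : ℝ}
    (ha : 0 < a) (hb : 0 < b)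
    (h : (fun x => g x - (c * x ^ (-a) + d * x ^ (-b))) =o[atTop] fun x => x ^ (-b)) :
    (fun u => tailLogIntegral 0 g u - a⁻¹ * g u - d * (b⁻¹ - a⁻¹) * u ^ (-b))
      =o[atTop] fun u => u ^ (-b) := by
  refine ((isLittleO_tailLogIntegral_sub hg ha hb h 0).sub (h.const_mul_left a⁻¹)).congr_left
    fun u => ?_
  simp only [Nat.factorial_zero, Nat.cast_one, zero_add, pow_one, one_div]
  field_simp
  ring

lemma mul_rpow_neg_mul_one_add_eventuallyEq (a δ c d : ℝ) :
    (fun x : ℝ => c * x ^ (-a) * (1 + d * x ^ (-δ))) =ᶠ[atTop]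
      fun x => c * x ^ (-a) + c * d * x ^ (-(a + δ)) := by
  filter_upwards [eventually_gt_atTop 0] with x hx
  rw [neg_add, rpow_add hx]
  ring

lemma tendsto_rpow_mul_of_isLittleO_sub {f : ℝ → ℝ} {a b c d : ℝ} (hab : a < b)
    (h : (fun x => f x - (c * x ^ (-a) + d * x ^ (-b))) =o[atTop] fun x => x ^ (-b)) :
    Tendsto (fun x => x ^ a * f x) atTop (𝓝 c) := by
  have hpow : Tendsto (fun x : ℝ => x ^ (a - b)) atTop (𝓝 0) := by
    simpa only [neg_sub] using tendsto_rpow_neg_atTop (sub_pos.2 hab)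
  have hpow_mul : ∀ᶠ x : ℝ in atTop, x ^ a * x ^ (-b) = x ^ (a - b) := by
    filter_upwards [eventually_gt_atTop 0] with x hx
    rw [← rpow_add hx, sub_eq_add_neg]
  have herr : Tendsto (fun x => x ^ a * (f x - (c * x ^ (-a) + d * x ^ (-b)))) atTop (𝓝 0) :=
    (((isBigO_refl _ _).mul_isLittleO h).congr' EventuallyEq.rfl hpow_mul).trans_tendsto hpow
  have hlim := herr.add (tendsto_const_nhds (x := c) |>.add (hpow.const_mul d))
  rw [mul_zero, add_zero, zero_add] at hlim
  refine hlim.congr' ?_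
  filter_upwards [hpow_mul, eventually_gt_atTop 0] with x hx hx0
  have hinv : x ^ a * x ^ (-a) = 1 := by rw [← rpow_add hx0, add_neg_cancel, rpow_zero]
  linear_combination (-c) * hinv - d * hx

lemma eventually_pos_of_tendsto_rpow_mul {g : ℝ → ℝ} {a β : ℝ} (hβ : 0 < β)
    (h : Tendsto (fun x => x ^ a * g x) atTop (𝓝 β)) : ∀ᶠ x in atTop, 0 < g x := by
  filter_upwards [h.eventually (lt_mem_nhds hβ), eventually_gt_atTop 0] with x hgx hx
  exact pos_of_mul_pos_right hgx (rpow_pos_of_pos hx a).le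

lemma isBigO_rpow_neg_of_tendsto_rpow_mul {g : ℝ → ℝ} {a β : ℝ}
    (h : Tendsto (fun x => x ^ a * g x) atTop (𝓝 β)) : g =O[atTop] fun x => x ^ (-a) := by
  refine ((isBigO_refl (fun x : ℝ => x ^ (-a)) atTop).mul (h.isBigO_one ℝ)).congr' ?_ ?_
  · filter_upwards [eventually_gt_atTop 0] with x hx
    rw [← mul_assoc, ← rpow_add hx, neg_add_cancel, rpow_zero, one_mul]
  · exact .of_eq (funext fun _ => mul_one _)

lemma tendsto_rpow_neg_half_mul_rpow_neg {g : ℝ → ℝ} {a b β : ℝ} (hβ : 0 < β) (hab : a < 2 * b)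
    (h : Tendsto (fun x => x ^ a * g x) atTop (𝓝 β)) :
    Tendsto (fun x => g x ^ (-(1 / 2) : ℝ) * x ^ (-b)) atTop (𝓝 0) := by
  have hlim := (h.rpow_const (p := -(1 / 2)) (Or.inl hβ.ne')).mul
    (tendsto_rpow_neg_atTop (by linarith : 0 < b - a / 2))
  rw [mul_zero] at hlim
  refine hlim.congr' ?_
  filter_upwards [eventually_pos_of_tendsto_rpow_mul hβ h, eventually_gt_atTop 0] with x hg hx
  rw [mul_rpow (rpow_pos_of_pos hx a).le hg.le, ← rpow_mul hx.le, mul_comm (x ^ _),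
    mul_assoc, ← rpow_add hx]
  ring_nf

lemma rpow_neg_one_half_sq {x : ℝ} (hx : 0 ≤ x) : (x ^ (-(1 / 2) : ℝ)) ^ 2 = x⁻¹ := by
  rw [← rpow_natCast, ← rpow_mul hx]
  norm_num [rpow_neg_one]

lemma tendsto_tailLogIntegral_div {g : ℝ → ℝ} (hg : Measurable g) {a b c d : ℝ} (ha : 0 < a)
    (hab : a < b) (hc : c ≠ 0)
    (h : (fun x => g x - (c * x ^ (-a) + d * x ^ (-b))) =o[atTop] fun x => x ^ (-b)) (k : ℕ) :
    Tendsto (fun u => tailLogIntegral k g u / g u) atTop (𝓝 (k ! / a ^ (k + 1))) := by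
  have hT := tendsto_rpow_mul_of_isLittleO_sub hab
    (isLittleO_tailLogIntegral_sub hg ha (ha.trans hab) h k)
  have hlim := hT.div (tendsto_rpow_mul_of_isLittleO_sub hab h) hc
  rw [mul_div_cancel_left₀ _ hc] at hlim
  refine hlim.congr' ?_
  filter_upwards [eventually_gt_atTop 0] with u hu
  exact mul_div_mul_left _ _ (rpow_pos_of_pos hu a).ne'

lemma integral_pow_succ_eq_integral_meas_lt {Ω : Type*} [MeasurableSpace Ω] {μ : Measure Ω}
    [IsFiniteMeasure μ] {Z : Ω → ℝ} (hZ : Measurable Z) (hZ_nonneg : ∀ ω, 0 ≤ Z ω) (k : ℕ)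
    (hint : IntegrableOn (fun t => t ^ k * μ.real {ω | t < Z ω}) (Ioi 0)) :
    Integrable (fun ω => Z ω ^ (k + 1)) μ ∧
      ∫ ω, Z ω ^ (k + 1) ∂μ = (k + 1) * ∫ t in Ioi 0, t ^ k * μ.real {ω | t < Z ω} := by
  have hprimitive : ∀ z : ℝ, ∫ t in (0 : ℝ)..z, (k + 1) * t ^ k = z ^ (k + 1) := fun z => by
    rw [intervalIntegral.integral_const_mul, integral_pow]
    field_simp
    simp
  have hlayer : ∫⁻ ω, ENNReal.ofReal (Z ω ^ (k + 1)) ∂μ =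
      ∫⁻ t in Ioi 0, ENNReal.ofReal ((k + 1) * (t ^ k * μ.real {ω | t < Z ω})) := by
    simp_rw [← hprimitive]
    rw [lintegral_comp_eq_lintegral_meas_lt_mul μ (ae_of_all _ hZ_nonneg) hZ.aemeasurable
      (fun t _ => (by fun_prop : Continuous fun t : ℝ => (k + 1) * t ^ k).intervalIntegrable _ _)
      (ae_restrict_of_forall_mem measurableSet_Ioi fun t (ht : 0 < t) => by positivity)]
    refine setLIntegral_congr_fun measurableSet_Ioi fun t ht => ?_
    rw [← mul_assoc, mul_comm, ENNReal.ofReal_mul' measureReal_nonneg, ofReal_measureReal]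
  have hpow_nonneg : 0 ≤ᵐ[μ] fun ω => Z ω ^ (k + 1) :=
    ae_of_all _ fun ω => pow_nonneg (hZ_nonneg ω) _
  have hrhs_nonneg : 0 ≤ᵐ[volume.restrict (Ioi 0)]
      fun t : ℝ => (k + 1) * (t ^ k * μ.real {ω | t < Z ω}) :=
    ae_restrict_of_forall_mem measurableSet_Ioi fun t (ht : 0 < t) => by positivity
  have hint' := hint.const_mul ((k : ℝ) + 1)
  refine ⟨⟨(hZ.pow_const _).aestronglyMeasurable,
    (hasFiniteIntegral_iff_ofReal hpow_nonneg).2 (hlayer ▸ hint'.lintegral_lt_top)⟩, ?_⟩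
  rw [integral_eq_lintegral_of_nonneg_ae hpow_nonneg (hZ.pow_const _).aestronglyMeasurable,
    hlayer, ← integral_eq_lintegral_of_nonneg_ae hrhs_nonneg hint'.aestronglyMeasurable,
    integral_const_mul]

section LogExcess

variable {Ω : Type*} {X : Ω → ℝ} {u : ℝ}

noncomputable def logExcess (X : Ω → ℝ) (u : ℝ) : Ω → ℝ :=
  {ω | u < X ω}.indicator fun ω => log (X ω / u)

noncomputable def excessScore (X : Ω → ℝ) (u γ : ℝ) : Ω → ℝ :=
  {ω | u < X ω}.indicator fun ω => log (X ω / u) - γ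

lemma logExcess_nonneg (hu : 0 < u) (ω : Ω) : 0 ≤ logExcess X u ω :=
  indicator_nonneg (fun _ hω => log_nonneg ((one_le_div hu).2 (le_of_lt hω))) ω

lemma setOf_lt_logExcess (hu : 0 < u) {t : ℝ} (ht : 0 < t) :
    {ω | t < logExcess X u ω} = {ω | u * exp t < X ω} := by
  ext ω
  change t < logExcess X u ω ↔ u * exp t < X ω
  rw [logExcess, indicator_apply]
  split_ifs with h
  · rw [lt_log_iff_exp_lt (div_pos (hu.trans h) hu), lt_div_iff₀ hu, mul_comm]
  · exact iff_of_false ht.not_gt fun h' =>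
      h ((le_mul_of_one_le_right hu.le (one_le_exp ht.le)).trans_lt h')

lemma excessScore_eq_sub (γ : ℝ) (ω : Ω) :
    excessScore X u γ ω = logExcess X u ω - γ * {ω | u < X ω}.indicator 1 ω := by
  by_cases h : u < X ω <;> simp [excessScore, logExcess, h]

lemma excessScore_sq (γ : ℝ) (ω : Ω) : excessScore X u γ ω ^ 2 =
    logExcess X u ω ^ 2 - 2 * γ * logExcess X u ω + γ ^ 2 * {ω | u < X ω}.indicator 1 ω := by
  by_cases h : u < X ω <;> simp [excessScore, logExcess, h]
  ring

variable [MeasurableSpace Ω] {μ : Measure Ω}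

def tailProb (μ : Measure Ω) (X : Ω → ℝ) (x : ℝ) : ℝ := μ.real {ω | x < X ω}

noncomputable def normalizedExcessScore (μ : Measure Ω) (X : Ω → ℝ) (γ u : ℝ) : Ω → ℝ :=
  fun ω => tailProb μ X u ^ (-(1 / 2 : ℝ)) * excessScore X u γ ω

lemma measurable_tailProb [IsFiniteMeasure μ] : Measurable (tailProb μ X) :=
  Antitone.measurable fun _ _ hxy => measureReal_mono fun _ hω => hxy.trans_lt hω

lemma measurable_logExcess (hX : Measurable X) : Measurable (logExcess X u) :=
  (hX.div_const u).log.indicator (measurableSet_lt measurable_const hX)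

lemma integral_logExcess_pow_succ [IsFiniteMeasure μ] (hX : Measurable X) (hu : 0 < u) (k : ℕ)
    (hint : IntegrableOn (fun t => t ^ k * tailProb μ X (u * exp t)) (Ioi 0)) :
    Integrable (fun ω => logExcess X u ω ^ (k + 1)) μ ∧
      ∫ ω, logExcess X u ω ^ (k + 1) ∂μ = (k + 1) * tailLogIntegral k (tailProb μ X) u := by
  have hset : ∀ t ∈ Ioi (0 : ℝ),
      t ^ k * μ.real {ω | t < logExcess X u ω} = t ^ k * tailProb μ X (u * exp t) :=
    fun t ht => by rw [setOf_lt_logExcess hu ht, tailProb]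
  rw [tailLogIntegral, ← setIntegral_congr_fun measurableSet_Ioi hset]
  exact integral_pow_succ_eq_integral_meas_lt (measurable_logExcess hX) (logExcess_nonneg hu) k
    (hint.congr_fun (fun t ht => (hset t ht).symm) measurableSet_Ioi)

lemma integral_excessScore [IsFiniteMeasure μ] (hX : Measurable X) (hu : 0 < u) (γ : ℝ)
    (h0 : IntegrableOn (fun t => t ^ 0 * tailProb μ X (u * exp t)) (Ioi 0)) :
    ∫ ω, excessScore X u γ ω ∂μ = tailLogIntegral 0 (tailProb μ X) u - γ * tailProb μ X u := by
  obtain ⟨hint, hval⟩ := integral_logExcess_pow_succ hX hu 0 h0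
  simp only [zero_add, pow_one, Nat.cast_zero, one_mul] at hint hval
  have hs : MeasurableSet {ω | u < X ω} := measurableSet_lt measurable_const hX
  have hind : Integrable ({ω | u < X ω}.indicator (1 : Ω → ℝ)) μ :=
    (integrable_const 1).indicator hs
  simp_rw [excessScore_eq_sub]
  rw [integral_sub hint (hind.const_mul γ), hval, integral_const_mul, integral_indicator_one hs,
    tailProb]

lemma variance_excessScore [IsProbabilityMeasure μ] (hX : Measurable X) (hu : 0 < u) (γ : ℝ)
    (h0 : IntegrableOn (fun t => t ^ 0 * tailProb μ X (u * exp t)) (Ioi 0))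
    (h1 : IntegrableOn (fun t => t ^ 1 * tailProb μ X (u * exp t)) (Ioi 0)) :
    variance (excessScore X u γ) μ =
      (2 * tailLogIntegral 1 (tailProb μ X) u - 2 * γ * tailLogIntegral 0 (tailProb μ X) u
        + γ ^ 2 * tailProb μ X u)
        - (tailLogIntegral 0 (tailProb μ X) u - γ * tailProb μ X u) ^ 2 := by
  obtain ⟨hint1, hval1⟩ := integral_logExcess_pow_succ hX hu 0 h0
  obtain ⟨hint2, hval2⟩ := integral_logExcess_pow_succ hX hu 1 h1
  simp only [zero_add, pow_one, Nat.cast_zero, one_mul] at hint1 hval1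
  simp only [Nat.cast_one, one_add_one_eq_two] at hint2 hval2
  have hs : MeasurableSet {ω | u < X ω} := measurableSet_lt measurable_const hX
  have hind : Integrable ({ω | u < X ω}.indicator (1 : Ω → ℝ)) μ :=
    (integrable_const 1).indicator hs
  have hlin : Integrable (fun ω => logExcess X u ω ^ 2 - 2 * γ * logExcess X u ω) μ :=
    hint2.sub (hint1.const_mul _)
  have hsq_int : Integrable (fun ω => excessScore X u γ ω ^ 2) μ := by
    simp_rw [excessScore_sq]
    exact hlin.add (hind.const_mul _)
  have hmeas : Measurable (excessScore X u γ) :=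
    ((hX.div_const u).log.sub_const γ).indicator hs
  have hmem : MemLp (excessScore X u γ) 2 μ :=
    (memLp_two_iff_integrable_sq hmeas.aestronglyMeasurable).2 hsq_int
  rw [variance_eq_sub hmem, integral_excessScore hX hu γ h0]
  simp only [Pi.pow_apply, excessScore_sq]
  rw [integral_add hlin (hind.const_mul _), integral_sub hint2 (hint1.const_mul _),
    integral_const_mul, integral_const_mul, hval1, hval2, integral_indicator_one hs, tailProb]

lemma eventually_integral_excessScore_and_variance [IsProbabilityMeasure μ] (hX : Measurable X)
    {a : ℝ} (ha : 0 < a) (hS : tailProb μ X =O[atTop] fun x => x ^ (-a)) (γ : ℝ) :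
    ∀ᶠ u in atTop,
      ∫ ω, excessScore X u γ ω ∂μ = tailLogIntegral 0 (tailProb μ X) u - γ * tailProb μ X u ∧
      variance (excessScore X u γ) μ =
        (2 * tailLogIntegral 1 (tailProb μ X) u - 2 * γ * tailLogIntegral 0 (tailProb μ X) u
          + γ ^ 2 * tailProb μ X u)
          - (tailLogIntegral 0 (tailProb μ X) u - γ * tailProb μ X u) ^ 2 := by
  have hint := eventually_integrableOn_pow_mul_comp_mul_exp measurable_tailProb hS ha
  filter_upwards [hint 0, hint 1, eventually_gt_atTop 0] with u h0 h1 hu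
  exact ⟨integral_excessScore hX hu γ h0, variance_excessScore hX hu γ h0 h1⟩

end LogExcess

section NormalizedExcessScore

variable {Ω : Type*} [MeasurableSpace Ω] {μ : Measure Ω} [IsProbabilityMeasure μ] {X : Ω → ℝ}
  {γ b c d : ℝ}

lemma isLittleO_integral_normalizedExcessScore_sub (hX : Measurable X) (hγ : 0 < γ)
    (hb : 1 / γ < b)
    (h : (fun x => tailProb μ X x - (c * x ^ (-(1 / γ)) + d * x ^ (-b))) =o[atTop]
      fun x => x ^ (-b)) :
    (fun u => ∫ ω, normalizedExcessScore μ X γ u ω ∂μ -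
        tailProb μ X u ^ (-(1 / 2 : ℝ)) * d * (1 / b - γ) * u ^ (-b))
      =o[atTop] fun u => tailProb μ X u ^ (-(1 / 2 : ℝ)) * u ^ (-b) := by
  have hr : 0 < 1 / γ := by positivity
  have hS := isBigO_rpow_neg_of_tendsto_rpow_mul (tendsto_rpow_mul_of_isLittleO_sub hb h)
  refine ((isBigO_refl _ _).mul_isLittleO (isLittleO_tailLogIntegral_zero_sub_inv_mul
    measurable_tailProb hr (hr.trans hb) h)).congr' ?_ .rfl
  filter_upwards [eventually_integral_excessScore_and_variance hX hr hS γ] with u hu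
  simp only [normalizedExcessScore, integral_const_mul, hu.1, one_div, inv_inv]
  ring

lemma tendsto_integral_normalizedExcessScore (hX : Measurable X) (hγ : 0 < γ) (hb : 1 / γ < b)
    (hc : 0 < c)
    (h : (fun x => tailProb μ X x - (c * x ^ (-(1 / γ)) + d * x ^ (-b))) =o[atTop]
      fun x => x ^ (-b)) :
    Tendsto (fun u => ∫ ω, normalizedExcessScore μ X γ u ω ∂μ) atTop (𝓝 0) := by
  have hr : 0 < 1 / γ := by positivity
  have hscale := tendsto_rpow_neg_half_mul_rpow_neg (b := b) hc (by linarith)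
    (tendsto_rpow_mul_of_isLittleO_sub hb h)
  have hlim := ((isLittleO_integral_normalizedExcessScore_sub hX hγ hb h).trans_tendsto
    hscale).add (hscale.const_mul (d * (1 / b - γ)))
  rw [mul_zero, add_zero] at hlim
  exact hlim.congr fun u => by ring

lemma tendsto_variance_normalizedExcessScore (hX : Measurable X) (hγ : 0 < γ) (hb : 1 / γ < b)
    (hc : 0 < c)
    (h : (fun x => tailProb μ X x - (c * x ^ (-(1 / γ)) + d * x ^ (-b))) =o[atTop]
      fun x => x ^ (-b)) :
    Tendsto (fun u => variance (normalizedExcessScore μ X γ u) μ) atTop (𝓝 (γ ^ 2)) := by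
  have hr : 0 < 1 / γ := by positivity
  have hSlim := tendsto_rpow_mul_of_isLittleO_sub hb h
  have hT0 := tendsto_tailLogIntegral_div measurable_tailProb hr hb hc.ne' h 0
  have hT1 := tendsto_tailLogIntegral_div measurable_tailProb hr hb hc.ne' h 1
  have hlim := (((hT1.const_mul 2).sub (hT0.const_mul (2 * γ))).add_const (γ ^ 2)).sub
    ((tendsto_integral_normalizedExcessScore hX hγ hb hc h).pow 2)
  convert hlim.congr' ?_ using 2
  · norm_num
    ring
  filter_upwards [eventually_integral_excessScore_and_variance hX hr
    (isBigO_rpow_neg_of_tendsto_rpow_mul hSlim) γ,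
    eventually_pos_of_tendsto_rpow_mul hc hSlim] with u hu hSu
  unfold normalizedExcessScore
  rw [variance_const_mul, integral_const_mul, hu.2, rpow_neg_one_half_sq hSu.le, mul_pow,
    rpow_neg_one_half_sq hSu.le, hu.1]
  field_simp

end NormalizedExcessScore

theorem excess_score_mean_variance_general
    {Ω : Type*} [MeasurableSpace Ω] (μ : Measure Ω) [IsProbabilityMeasure μ]
    (X : Ω → ℝ) (hX : Measurable X)
    (β γ δ C : ℝ) (hβ : 0 < β) (hγ : 0 < γ) (hδ : 0 < δ)
    (α : ℝ → ℝ) (hα : ∀ u, α u = (μ {ω | u < X ω}).toReal)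
    (hS : (fun x : ℝ => α x - β * x ^ (-(1 / γ)) * (1 + C * x ^ (-δ)))
      =o[atTop] (fun x : ℝ => x ^ (-(1 / γ) - δ)))
    (Y : ℝ → Ω → ℝ)
    (hY : ∀ u ω, Y u ω =
      (α u) ^ (-(1 / 2 : ℝ)) * Set.indicator {ω | u < X ω}
        (fun ω => Real.log (X ω / u) - γ) ω) :
    ((fun u : ℝ => (∫ ω, Y u ω ∂μ) -
        (α u) ^ (-(1 / 2 : ℝ)) * β * C * (1 / (1 / γ + δ) - γ) * u ^ (-(1 / γ) - δ))
      =o[atTop] (fun u : ℝ => (α u) ^ (-(1 / 2 : ℝ)) * u ^ (-(1 / γ) - δ))) ∧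
    Tendsto (fun u : ℝ => ∫ ω, Y u ω ∂μ) atTop (nhds 0) ∧
    Tendsto (fun u : ℝ => variance (Y u) μ) atTop (nhds (γ ^ 2)) := by
  obtain rfl : α = tailProb μ X := funext hα
  obtain rfl : Y = normalizedExcessScore μ X γ := funext fun u => funext (hY u)
  have hb : 1 / γ < 1 / γ + δ := lt_add_of_pos_right _ hδ
  rw [show -(1 / γ) - δ = -(1 / γ + δ) by ring] at hS ⊢
  have hexp : (fun x => tailProb μ X x - (β * x ^ (-(1 / γ)) + β * C * x ^ (-(1 / γ + δ))))
      =o[atTop] fun x => x ^ (-(1 / γ + δ)) := by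
    refine hS.congr' ?_ .rfl
    filter_upwards [mul_rpow_neg_mul_one_add_eventuallyEq (1 / γ) δ β C] with x hx
    rw [hx]
  refine ⟨(isLittleO_integral_normalizedExcessScore_sub hX hγ hb hexp).congr_left fun u => ?_,
    tendsto_integral_normalizedExcessScore hX hγ hb hβ hexp,
    tendsto_variance_normalizedExcessScore hX hγ hb hβ hexp⟩
  ring

/-- Let `Y_u = α_u^{-1/2}(log(X/u) − γ) 1{X > u}` with `α_u = P(X > u)`, where `X` has
tail `P(X > x) = β x^{-1/γ}(1 + C x^{-δ} + o(x^{-δ}))`, `β, γ, δ > 0`. Then as `u → ∞`: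
(i) `E(Y_u) = α_u^{-1/2} βC(1/(1/γ+δ) − γ) u^{-1/γ-δ} + o(α_u^{-1/2} u^{-1/γ-δ}) → 0`,
and (ii) `Var(Y_u) → γ²`. -/
theorem excess_score_mean_variance
    {Ω : Type*} [MeasurableSpace Ω] (μ : Measure Ω) [IsProbabilityMeasure μ]
    (X : Ω → ℝ) (hX : Measurable X) (hXpos : ∀ ω, 0 ≤ X ω)
    (β γ δ C : ℝ) (hβ : 0 < β) (hγ : 0 < γ) (hδ : 0 < δ)
    (α : ℝ → ℝ) (hα : ∀ u, α u = (μ {ω | u < X ω}).toReal)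
    (hS : (fun x : ℝ => α x - β * x ^ (-(1 / γ)) * (1 + C * x ^ (-δ)))
      =o[atTop] (fun x : ℝ => x ^ (-(1 / γ) - δ)))
    (Y : ℝ → Ω → ℝ)
    (hY : ∀ u ω, Y u ω =
      (α u) ^ (-(1 / 2 : ℝ)) * Set.indicator {ω | u < X ω}
        (fun ω => Real.log (X ω / u) - γ) ω) :
    ((fun u : ℝ => (∫ ω, Y u ω ∂μ) -
        (α u) ^ (-(1 / 2 : ℝ)) * β * C * (1 / (1 / γ + δ) - γ) * u ^ (-(1 / γ) - δ))
      =o[atTop] (fun u : ℝ => (α u) ^ (-(1 / 2 : ℝ)) * u ^ (-(1 / γ) - δ))) ∧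
    Tendsto (fun u : ℝ => ∫ ω, Y u ω ∂μ) atTop (nhds 0) ∧
    Tendsto (fun u : ℝ => variance (Y u) μ) atTop (nhds (γ ^ 2)) :=
  excess_score_mean_variance_general μ X hX β γ δ C hβ hγ hδ α hα hS Y hY
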